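/- Let ℬ ⊂ ℝ^p be the convex hull of finitely many parameter vectors {χ^ν}_{ν∈Ω}. Consider an interconnected system whose agent dynamics are affine in the parameter: x_{i,k+1}(χ) = f_i(x_{i,k}, {x_{j,k}}_{j∈ℰ_i}, d_{i,k}; χ) = Σ_{l=1}^p χ_l Φ_{i,l}(x_{i,k}, {x_{j,k}}_{j∈ℰ_i}, d_{i,k}), with each Φ_{i,l} independent of χ. Assume each V_i : ℝ^{n_i} → [0,∞) is convex and satisfies class-𝒦_∞ sandwich bounds α1(|x|₂) ≤ V_i(x) ≤ α2(|x|₂). Suppose there exist ψ ≥ 0 and nonnegative gains γ_{i,j} with max_{i∈𝒩} Σ_{j∈ℰ_i∪{i}} γ_{i,j} ≤ 1−ε for some ε ∈ (0,1), such that for every vertex χ^ν and all admissible states and disturbances, V_i(f_i(x_{i,k}, {x_{j,k}}_{j∈ℰ_i}, d_{i,k}; χ^ν)) ≤ Σ_{j∈ℰ_i∪{i}} γ_{i,j} V_j(x_{j,k}) + ψ|d_{i,k}|₂ for all i ∈ 𝒩. Then for every χ ∈ ℬ the same inequality holds, i.e. V_i(f_i(x_{i,k}, {x_{j,k}}_{j∈ℰ_i},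 d_{i,k}; χ)) ≤ Σ_{j∈ℰ_i∪{i}} γ_{i,j} V_j(x_{j,k}) + ψ|d_{i,k}|₂, and the parametrized interconnected system is scalably input-to-state stable for every χ ∈ ℬ. -/

import Mathlib

/-! The successor state is linear in the parameter and each `V i` is convex, so
`χ ↦ V i (f χ i x d)` is convex and its maximum over the convex hull is attained at a vertex;
hence the vertex decrement inequality holds on the whole hull. For sISS, the maximum over agents
`W = max_j V_j` obeys `W_{k+1} ≤ (1 - ε) W_k + ψ C` by the small-gain condition, hence
`W_k ≤ (1 - ε)^k W_0 + ψ C / ε`; the sandwich bounds and the inverse of `α₁` turn this into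
a bound on the states, split as `α₁⁻¹ (a + b) ≤ α₁⁻¹ (2 a) + α₁⁻¹ (2 b)`. -/

open scoped NNReal
open Filter

noncomputable section

/-- `ℝ^m` with the Euclidean norm. -/
abbrev Evec (m : ℕ) : Type := EuclideanSpace ℝ (Fin m)

/-- A class-𝒦 function: continuous, strictly increasing, vanishing at `0`. -/
def IsClassK (α : ℝ≥0 → ℝ≥0) : Prop :=
  Continuous α ∧ StrictMono α ∧ α 0 = 0

/-- A class-𝒦∞ function: class 𝒦 and unbounded. -/
def IsClassKInfty (α : ℝ≥0 → ℝ≥0) : Prop :=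
  IsClassK α ∧ Tendsto α atTop atTop

/-- A class-𝒦ℒ function. -/
def IsClassKL (β : ℝ≥0 → ℕ → ℝ≥0) : Prop :=
  (∀ k : ℕ, IsClassK fun s => β s k) ∧
    ∀ s : ℝ≥0, Tendsto (fun k => β s k) atTop (nhds 0)

open Finset

theorem ConvexOn.le_of_mem_convexHull {𝕜 E β : Type*} [Field 𝕜] [LinearOrder 𝕜]
    [IsStrictOrderedRing 𝕜] [AddCommGroup E] [Module 𝕜 E] [AddCommGroup β] [LinearOrder β]
    [IsOrderedAddMonoid β] [Module 𝕜 β] [IsStrictOrderedModule 𝕜 β] {V : E → β}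
    (hV : ConvexOn 𝕜 Set.univ V) {s : Set E} {R : β} (h : ∀ y ∈ s, V y ≤ R) {x : E}
    (hx : x ∈ convexHull 𝕜 s) : V x ≤ R :=
  let ⟨y, hy, hxy⟩ := hV.exists_ge_of_mem_convexHull (Set.subset_univ s) hx
  hxy.trans (h y hy)

theorem ConvexOn.sum_smul_le_of_mem_convexHull {κ M : Type*} [Fintype κ] [AddCommGroup M]
    [Module ℝ M] {V : M → ℝ} (hV : ConvexOn ℝ Set.univ V) (Φ : κ → M) {s : Set (κ → ℝ)}
    {R : ℝ} (h : ∀ χ ∈ s, V (∑ l, χ l • Φ l) ≤ R) {χ : κ → ℝ} (hχ : χ ∈ convexHull ℝ s) :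
    V (∑ l, χ l • Φ l) ≤ R := by
  have hVΦ := hV.comp_linearMap (Fintype.linearCombination ℝ Φ)
  simp only [Set.preimage_univ] at hVΦ
  simpa only [Function.comp_apply, Fintype.linearCombination_apply] using
    hVΦ.le_of_mem_convexHull (by simpa only [Function.comp_apply,
      Fintype.linearCombination_apply] using h) hχ

theorem isClassK_id : IsClassK id :=
  ⟨continuous_id, strictMono_id, rfl⟩

theorem IsClassK.comp {f g : ℝ≥0 → ℝ≥0} (hg : IsClassK g) (hf : IsClassK f) :
    IsClassK (g ∘ f) :=
  ⟨hg.1.comp hf.1, hg.2.1.comp hf.2.1, by simp [hf.2.2, hg.2.2]⟩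

theorem IsClassK.const_mul {f : ℝ≥0 → ℝ≥0} (hf : IsClassK f) {c : ℝ≥0} (hc : 0 < c) :
    IsClassK fun s => c * f s :=
  ⟨continuous_const.mul hf.1, fun _ _ hab => mul_lt_mul_of_pos_left (hf.2.1 hab) hc,
    by simp [hf.2.2]⟩

theorem IsClassK.isClassKL_pow_mul {f : ℝ≥0 → ℝ≥0} (hf : IsClassK f) {q : ℝ≥0} (hq0 : 0 < q)
    (hq1 : q < 1) : IsClassKL fun s k => q ^ k * f s :=
  ⟨fun k => hf.const_mul (pow_pos hq0 k), fun s => by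
    simpa using (NNReal.tendsto_pow_atTop_nhds_zero_of_lt_one hq1).mul_const (f s)⟩

theorem IsClassK.comp_isClassKL {g : ℝ≥0 → ℝ≥0} {β : ℝ≥0 → ℕ → ℝ≥0} (hg : IsClassK g)
    (hβ : IsClassKL β) : IsClassKL fun s k => g (β s k) :=
  ⟨fun k => hg.comp (hβ.1 k), fun s => by
    have h := (hg.1.tendsto 0).comp (hβ.2 s)
    rwa [hg.2.2] at h⟩

namespace IsClassKInfty

variable {α : ℝ≥0 → ℝ≥0} (hα : IsClassKInfty α)

include hα in
theorem surjective : Function.Surjective α := by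
  refine hα.1.1.surjective hα.2 ?_
  rw [OrderBot.atBot_eq]
  simp [hα.1.2.2]

def orderIso : ℝ≥0 ≃o ℝ≥0 :=
  StrictMono.orderIsoOfSurjective α hα.1.2.1 hα.surjective

theorem orderIso_symm_apply_self (t : ℝ≥0) : hα.orderIso.symm (α t) = t :=
  StrictMono.orderIsoOfSurjective_symm_apply_self α _ _ t

theorem isClassK_orderIso_symm : IsClassK hα.orderIso.symm :=
  ⟨hα.orderIso.symm.continuous, hα.orderIso.symm.strictMono, by
    simpa [hα.1.2.2] using hα.orderIso_symm_apply_self 0⟩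

end IsClassKInfty

theorem Monotone.map_add_le {g : ℝ≥0 → ℝ≥0} (hg : Monotone g) (a b : ℝ≥0) :
    g (a + b) ≤ g (2 * a) + g (2 * b) := by
  rcases le_total a b with h | h
  · exact (hg (by rw [two_mul]; gcongr)).trans le_add_self
  · exact (hg (by rw [two_mul]; gcongr)).trans le_self_add

theorem le_pow_mul_add_div_of_le_mul_add {a : ℕ → ℝ≥0} {ε b : ℝ≥0} (hε0 : 0 < ε)
    (hε1 : ε ≤ 1) (h : ∀ k, a (k + 1) ≤ (1 - ε) * a k + b) (k : ℕ) :
    a k ≤ (1 - ε) ^ k * a 0 + b / ε := by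
  have hfix : (1 - ε) * (b / ε) + b = b / ε := by
    rw [tsub_mul, one_mul, mul_comm, div_mul_cancel₀ b hε0.ne', tsub_add_cancel_of_le]
    exact (le_div_iff₀ hε0).2 (mul_le_of_le_one_right b.2 hε1)
  induction k with
  | zero => simp
  | succ k ih =>
    calc a (k + 1) ≤ (1 - ε) * a k + b := h k
      _ ≤ (1 - ε) * ((1 - ε) ^ k * a 0 + b / ε) + b := by gcongr
      _ = (1 - ε) ^ (k + 1) * a 0 + ((1 - ε) * (b / ε) + b) := by ring
      _ = (1 - ε) ^ (k + 1) * a 0 + b / ε := by rw [hfix]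

def lyapunovMax {ι : Type*} [Fintype ι] {X : ι → Type*} (V : ∀ i, X i → ℝ≥0)
    (x : ∀ i, X i) : ℝ≥0 :=
  univ.sup fun i => V i (x i)

theorem lyapunovMax_map_le {ι : Type*} [Fintype ι] {X U : ι → Type*} [∀ i, NNNorm (U i)]
    {V : ∀ i, X i → ℝ≥0} {F : ∀ i, (∀ j, X j) → U i → X i} {N : ι → Finset ι}
    {γ : ι → ι → ℝ≥0} {ε ψ : ℝ≥0} (hsg : ∀ i, ∑ j ∈ N i, γ i j ≤ 1 - ε)
    (hdec : ∀ i x d, V i (F i x d) ≤ ∑ j ∈ N i, γ i j * V j (x j) + ψ * ‖d‖₊)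
    (x : ∀ j, X j) {d : ∀ i, U i} {C : ℝ≥0} (hC : ∀ i, ‖d i‖₊ ≤ C) :
    lyapunovMax V (fun i => F i x (d i)) ≤ (1 - ε) * lyapunovMax V x + ψ * C := by
  refine Finset.sup_le fun i _ => ?_
  calc V i (F i x (d i)) ≤ ∑ j ∈ N i, γ i j * V j (x j) + ψ * ‖d i‖₊ := hdec i x (d i)
    _ ≤ ∑ j ∈ N i, γ i j * lyapunovMax V x + ψ * C := by
        gcongr with j
        · exact le_sup (f := fun j => V j (x j)) (mem_univ j)
        · exact hC i
    _ = (∑ j ∈ N i, γ i j) * lyapunovMax V x + ψ * C := by rw [sum_mul]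
    _ ≤ (1 - ε) * lyapunovMax V x + ψ * C := by gcongr; exact hsg i

def IsScalablyISS {ι : Type*} [Fintype ι] (n p : ι → ℕ)
    (F : ∀ i, (∀ j, Evec (n j)) → Evec (p i) → Evec (n i)) : Prop :=
  ∃ β : ℝ≥0 → ℕ → ℝ≥0, ∃ μ : ℝ≥0 → ℝ≥0, IsClassKL β ∧ IsClassK μ ∧
    ∀ (x : ℕ → ∀ j, Evec (n j)) (d : ℕ → ∀ i, Evec (p i)),
      (∀ (k : ℕ) (i : ι), x (k + 1) i = F i (x k) (d k i)) →
      ∀ C : ℝ≥0, (∀ (k : ℕ) (i : ι), ‖d k i‖₊ ≤ C) →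
      ∀ (k : ℕ) (i : ι), ‖x k i‖₊ ≤ β (univ.sup fun j => ‖x 0 j‖₊) k + μ C

theorem isScalablyISS_of_smallGain {ι : Type*} [Fintype ι] {n p : ι → ℕ}
    {F : ∀ i, (∀ j, Evec (n j)) → Evec (p i) → Evec (n i)} {N : ι → Finset ι}
    {γ : ι → ι → ℝ≥0} {ε ψ : ℝ≥0} (hε0 : 0 < ε) (hε1 : ε < 1) {α₁ α₂ : ℝ≥0 → ℝ≥0}
    (hα₁ : IsClassKInfty α₁) (hα₂ : IsClassK α₂) {V : ∀ i, Evec (n i) → ℝ≥0}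
    (hsandwich : ∀ i x, α₁ ‖x‖₊ ≤ V i x ∧ V i x ≤ α₂ ‖x‖₊)
    (hsg : ∀ i, ∑ j ∈ N i, γ i j ≤ 1 - ε)
    (hdec : ∀ i x d, V i (F i x d) ≤ ∑ j ∈ N i, γ i j * V j (x j) + ψ * ‖d‖₊) :
    IsScalablyISS n p F := by
  set g := hα₁.orderIso.symm
  have hg : IsClassK g := hα₁.isClassK_orderIso_symm
  -- `+ 1` keeps `μ` strictly increasing when `ψ = 0`
  refine ⟨fun s k => g ((1 - ε) ^ k * (2 * α₂ s)), fun C => g (2 * (ψ / ε + 1) * C),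
    hg.comp_isClassKL ((hα₂.const_mul two_pos).isClassKL_pow_mul (tsub_pos_of_lt hε1)
      (tsub_lt_self one_pos hε0)),
    hg.comp (isClassK_id.const_mul (by positivity)), ?_⟩
  intro x d hx C hC k i
  set S := univ.sup fun j => ‖x 0 j‖₊
  have hW : lyapunovMax V (x k) ≤ (1 - ε) ^ k * lyapunovMax V (x 0) + ψ * C / ε := by
    refine le_pow_mul_add_div_of_le_mul_add (a := fun k => lyapunovMax V (x k)) hε0 hε1.le
      (fun k => ?_) k
    rw [funext (hx k)]
    exact lyapunovMax_map_le hsg hdec (x k) (hC k)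
  have hW0 : lyapunovMax V (x 0) ≤ α₂ S := Finset.sup_le fun j _ =>
    (hsandwich j _).2.trans (hα₂.2.1.monotone (le_sup (f := fun j => ‖x 0 j‖₊) (mem_univ j)))
  have hxk : α₁ ‖x k i‖₊ ≤ (1 - ε) ^ k * α₂ S + ψ * C / ε :=
    calc α₁ ‖x k i‖₊ ≤ V i (x k i) := (hsandwich i _).1
      _ ≤ lyapunovMax V (x k) := le_sup (f := fun j => V j (x k j)) (mem_univ i)
      _ ≤ (1 - ε) ^ k * lyapunovMax V (x 0) + ψ * C / ε := hW
      _ ≤ (1 - ε) ^ k * α₂ S + ψ * C / ε := by gcongr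
  have hD : 2 * (ψ * C / ε) ≤ 2 * (ψ / ε + 1) * C := by
    rw [mul_assoc, add_mul, one_mul, div_mul_eq_mul_div]
    gcongr
    exact le_self_add
  calc ‖x k i‖₊ = g (α₁ ‖x k i‖₊) := (hα₁.orderIso_symm_apply_self _).symm
    _ ≤ g ((1 - ε) ^ k * α₂ S + ψ * C / ε) := g.monotone hxk
    _ ≤ g (2 * ((1 - ε) ^ k * α₂ S)) + g (2 * (ψ * C / ε)) := g.monotone.map_add_le _ _
    _ ≤ g ((1 - ε) ^ k * (2 * α₂ S)) + g (2 * (ψ / ε + 1) * C) := by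
        rw [mul_left_comm]
        gcongr

theorem sISS_parameter_affine_dynamics_general
    {ι : Type} [Fintype ι] [DecidableEq ι]
    {Ω : Type}
    (n p : ι → ℕ) (nbr : ι → Finset ι)
    (P : ℕ) (χv : Ω → (Fin P → ℝ))
    (Φ : ∀ i : ι, Fin P → (∀ j : ι, Evec (n j)) → Evec (p i) → Evec (n i))
    (f : (Fin P → ℝ) → ∀ i : ι, (∀ j : ι, Evec (n j)) → Evec (p i) → Evec (n i))
    (haff : ∀ (χ : Fin P → ℝ) (i : ι) (x : ∀ j : ι, Evec (n j)) (d : Evec (p i)),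
      f χ i x d = ∑ l : Fin P, χ l • Φ i l x d)
    (ε : ℝ≥0) (hε0 : 0 < ε) (hε1 : ε < 1) (ψ : ℝ≥0)
    (α₁ α₂ : ℝ≥0 → ℝ≥0) (hα₁ : IsClassKInfty α₁) (hα₂ : IsClassKInfty α₂)
    (γ : ι → ι → ℝ≥0)
    (hsg : ∀ i : ι, ∑ j ∈ insert i (nbr i), γ i j ≤ 1 - ε)
    (V : ∀ i : ι, Evec (n i) → ℝ≥0)
    (hconv : ∀ i : ι, ConvexOn ℝ Set.univ fun x : Evec (n i) => (V i x : ℝ))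
    (hsandwich : ∀ (i : ι) (x : Evec (n i)), α₁ ‖x‖₊ ≤ V i x ∧ V i x ≤ α₂ ‖x‖₊)
    (hvertex : ∀ (ν : Ω) (i : ι) (x : ∀ j : ι, Evec (n j)) (d : Evec (p i)),
      V i (f (χv ν) i x d) ≤ ∑ j ∈ insert i (nbr i), γ i j * V j (x j) + ψ * ‖d‖₊) :
    ∀ χ ∈ convexHull ℝ (Set.range χv),
      -- the decremental condition holds throughout the hull …
      (∀ (i : ι) (x : ∀ j : ι, Evec (n j)) (d : Evec (p i)),
        V i (f χ i x d) ≤ ∑ j ∈ insert i (nbr i), γ i j * V j (x j) + ψ * ‖d‖₊) ∧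
      -- … and the system with parameter `χ` is scalably input-to-state stable
      (∃ β : ℝ≥0 → ℕ → ℝ≥0, ∃ μ : ℝ≥0 → ℝ≥0, IsClassKL β ∧ IsClassK μ ∧
        ∀ (x : ℕ → ∀ j : ι, Evec (n j)) (d : ℕ → ∀ i : ι, Evec (p i)),
          (∀ (k : ℕ) (i : ι), x (k + 1) i = f χ i (x k) (d k i)) →
          ∀ C : ℝ≥0, (∀ (k : ℕ) (i : ι), ‖d k i‖₊ ≤ C) →
          ∀ (k : ℕ) (i : ι),
            ‖x k i‖₊ ≤ β (Finset.univ.sup fun j => ‖x 0 j‖₊) k + μ C) := by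
  intro χ hχ
  have hdec : ∀ (i : ι) (x : ∀ j : ι, Evec (n j)) (d : Evec (p i)),
      V i (f χ i x d) ≤ ∑ j ∈ insert i (nbr i), γ i j * V j (x j) + ψ * ‖d‖₊ := by
    intro i x d
    have hhull : (V i (f χ i x d) : ℝ) ≤
        ((∑ j ∈ insert i (nbr i), γ i j * V j (x j) + ψ * ‖d‖₊ : ℝ≥0) : ℝ) := by
      rw [haff]
      refine (hconv i).sum_smul_le_of_mem_convexHull _ ?_ hχ
      rintro _ ⟨ν, rfl⟩
      rw [← haff]
      exact_mod_cast hvertex ν i x d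
    exact_mod_cast hhull
  exact ⟨hdec, isScalablyISS_of_smallGain hε0 hε1 hα₁ hα₂.1 hsandwich hsg hdec⟩

/-- **sISS with parameter-affine dynamics.** Let `ℬ ⊂ ℝ^P` be the convex hull of
finitely many parameter vectors `χv ν`, and let the dynamics be affine in the
parameter: `f χ i x d = Σ_l χ l • Φ i l x d` with `Φ` independent of `χ`. Assume each
`V i` is convex and satisfies class-𝒦∞ sandwich bounds, and that there are `ψ ≥ 0`
and nonnegative gains with small-gain row sums at most `1 - ε` such that the
decremental condition holds at every vertex `χv ν` for all admissible states and
disturbances. Then for every `χ ∈ ℬ` the same vector Lyapunov functions satisfy the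
decremental condition, and the parametrized interconnected system is scalably
input-to-state stable. -/
theorem sISS_parameter_affine_dynamics
    {ι : Type} [Fintype ι] [Nonempty ι] [DecidableEq ι]
    {Ω : Type} [Fintype Ω] [Nonempty Ω]
    (n p : ι → ℕ) (nbr : ι → Finset ι)
    (P : ℕ) (χv : Ω → (Fin P → ℝ))
    (Φ : ∀ i : ι, Fin P → (∀ j : ι, Evec (n j)) → Evec (p i) → Evec (n i))
    (f : (Fin P → ℝ) → ∀ i : ι, (∀ j : ι, Evec (n j)) → Evec (p i) → Evec (n i))
    (haff : ∀ (χ : Fin P → ℝ) (i : ι) (x : ∀ j : ι, Evec (n j)) (d : Evec (p i)),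
      f χ i x d = ∑ l : Fin P, χ l • Φ i l x d)
    (ε : ℝ≥0) (hε0 : 0 < ε) (hε1 : ε < 1) (ψ : ℝ≥0)
    (α₁ α₂ : ℝ≥0 → ℝ≥0) (hα₁ : IsClassKInfty α₁) (hα₂ : IsClassKInfty α₂)
    (γ : ι → ι → ℝ≥0)
    (hsg : ∀ i : ι, ∑ j ∈ insert i (nbr i), γ i j ≤ 1 - ε)
    (V : ∀ i : ι, Evec (n i) → ℝ≥0)
    (hconv : ∀ i : ι, ConvexOn ℝ Set.univ fun x : Evec (n i) => (V i x : ℝ))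
    (hsandwich : ∀ (i : ι) (x : Evec (n i)), α₁ ‖x‖₊ ≤ V i x ∧ V i x ≤ α₂ ‖x‖₊)
    (hvertex : ∀ (ν : Ω) (i : ι) (x : ∀ j : ι, Evec (n j)) (d : Evec (p i)),
      V i (f (χv ν) i x d) ≤ ∑ j ∈ insert i (nbr i), γ i j * V j (x j) + ψ * ‖d‖₊) :
    ∀ χ ∈ convexHull ℝ (Set.range χv),
      -- the decremental condition holds throughout the hull …
      (∀ (i : ι) (x : ∀ j : ι, Evec (n j)) (d : Evec (p i)),
        V i (f χ i x d) ≤ ∑ j ∈ insert i (nbr i), γ i j * V j (x j) + ψ * ‖d‖₊) ∧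
      -- … and the system with parameter `χ` is scalably input-to-state stable
      (∃ β : ℝ≥0 → ℕ → ℝ≥0, ∃ μ : ℝ≥0 → ℝ≥0, IsClassKL β ∧ IsClassK μ ∧
        ∀ (x : ℕ → ∀ j : ι, Evec (n j)) (d : ℕ → ∀ i : ι, Evec (p i)),
          (∀ (k : ℕ) (i : ι), x (k + 1) i = f χ i (x k) (d k i)) →
          ∀ C : ℝ≥0, (∀ (k : ℕ) (i : ι), ‖d k i‖₊ ≤ C) →
          ∀ (k : ℕ) (i : ι),
            ‖x k i‖₊ ≤ β (Finset.univ.sup fun j => ‖x 0 j‖₊) k + μ C) :=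
  sISS_parameter_affine_dynamics_general n p nbr P χv Φ f haff ε hε0 hε1 ψ α₁ α₂ hα₁ hα₂ γ hsg V
    hconv hsandwich hvertex
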